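/- Let G be a connected simple graph on a finite nonempty vertex type V, let dist denote the graph distance in G, and let σ : V ≃ V be a permutation, interpreted as placing on each vertex v a token whose desired destination is σ v. Define the companion digraph F on V by: there is a directed edge from v to u iff v and u are adjacent in G and dist (σ v) u < dist (σ v) v. If σ is not the identity permutation, then at least one of the following holds: (a) F contains a directed cycle, i.e., there exist k ≥ 1 and vertices v₀, v₁, …, v_k with v_k = v₀ and a directed F-edge from v_i to v_{i+1} for every i < k; or (b) there exist vertices v and u with a directed F-edge from v to u such that σ u = u (an unhappy swap: the token on u is already at its destination while the token on v moves closer). -/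

import Mathlib

/-!
A misplaced token can always step to the next vertex of a shortest path towards its
destination, so every vertex `v` with `σ v ≠ v` has an outgoing edge in `F`. If no edge of `F`
ends at a vertex whose token is placed, these edges stay among the misplaced vertices, and
following them inside this finite nonempty set must eventually revisit a vertex.
-/

theorem Function.exists_iterate_add_eq {α : Type*} [Finite α] (f : α → α) (x : α) :
    ∃ m k, 0 < k ∧ f^[m + k] x = f^[m] x := by
  obtain ⟨a, b, hab, heq⟩ := Finite.exists_ne_map_eq_of_infinite fun n => f^[n] x
  rcases hab.lt_or_gt with h | h
  · exact ⟨a, b - a, by omega, by rw [Nat.add_sub_cancel' h.le]; exact heq.symm⟩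
  · exact ⟨b, a - b, by omega, by rw [Nat.add_sub_cancel' h.le]; exact heq⟩

theorem exists_cycle_of_forall_exists_rel {α : Type*} [Finite α] {r : α → α → Prop}
    {s : Set α} (hs : s.Nonempty) (h : ∀ x ∈ s, ∃ y ∈ s, r x y) :
    ∃ k : ℕ, 1 ≤ k ∧ ∃ vs : Fin (k + 1) → α, vs (Fin.last k) = vs 0 ∧
      ∀ i : Fin k, r (vs i.castSucc) (vs i.succ) := by
  choose f hfs hfr using h
  let g : s → s := fun x => ⟨f x x.2, hfs x x.2⟩
  obtain ⟨x₀, hx₀⟩ := hs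
  obtain ⟨m, k, hk, hcycle⟩ := Function.exists_iterate_add_eq g ⟨x₀, hx₀⟩
  refine ⟨k, hk, fun i => g^[m + i] ⟨x₀, hx₀⟩, congrArg Subtype.val hcycle, fun i => ?_⟩
  simp only [Fin.val_succ, Fin.val_castSucc, ← add_assoc, Function.iterate_succ_apply']
  exact hfr _ _

theorem SimpleGraph.Reachable.exists_adj_dist_lt {V : Type*} {G : SimpleGraph V} {a v : V}
    (h : G.Reachable a v) (hne : a ≠ v) : ∃ u, G.Adj v u ∧ G.dist a u < G.dist a v := by
  obtain ⟨p, hp⟩ := h.symm.exists_walk_length_eq_dist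
  cases p with
  | nil => exact absurd rfl hne
  | cons hadj q =>
    refine ⟨_, hadj, ?_⟩
    have hq : G.dist a _ ≤ q.reverse.length := G.dist_le q.reverse
    rw [Walk.length_reverse] at hq
    rw [Walk.length_cons, dist_comm] at hp
    omega

theorem companion_digraph_cycle_or_unhappy_swap_general {V : Type*} [Fintype V]
    (G : SimpleGraph V) (hG : G.Connected) (σ : Equiv.Perm V)
    (F : V → V → Prop)
    (hF : ∀ v u, F v u ↔ G.Adj v u ∧ G.dist (σ v) u < G.dist (σ v) v)
    (hσ : σ ≠ 1) :
    (∃ k : ℕ, 1 ≤ k ∧ ∃ vs : Fin (k + 1) → V, vs (Fin.last k) = vs 0 ∧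
        ∀ i : Fin k, F (vs i.castSucc) (vs i.succ)) ∨
      (∃ v u : V, F v u ∧ σ u = u) := by
  refine or_iff_not_imp_right.2 fun hno_unhappy => ?_
  push Not at hno_unhappy
  have hmisplaced : {v | σ v ≠ v}.Nonempty := not_forall.1 fun h => hσ (Equiv.ext h)
  refine exists_cycle_of_forall_exists_rel hmisplaced fun v hv => ?_
  obtain ⟨u, hadj, hcloser⟩ := (hG.preconnected (σ v) v).exists_adj_dist_lt hv
  have hvu : F v u := (hF v u).2 ⟨hadj, hcloser⟩
  exact ⟨u, hno_unhappy v u hvu, hvu⟩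

/-- If the token permutation is not the identity, the companion digraph `F` contains
either a directed cycle (a happy swap chain) or a directed edge into a vertex whose
token is already placed (an unhappy swap). -/
theorem companion_digraph_cycle_or_unhappy_swap {V : Type*} [Fintype V] [Nonempty V]
    (G : SimpleGraph V) (hG : G.Connected) (σ : Equiv.Perm V)
    (F : V → V → Prop)
    (hF : ∀ v u, F v u ↔ G.Adj v u ∧ G.dist (σ v) u < G.dist (σ v) v)
    (hσ : σ ≠ 1) :
    (∃ k : ℕ, 1 ≤ k ∧ ∃ vs : Fin (k + 1) → V, vs (Fin.last k) = vs 0 ∧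
        ∀ i : Fin k, F (vs i.castSucc) (vs i.succ)) ∨
      (∃ v u : V, F v u ∧ σ u = u) :=
  companion_digraph_cycle_or_unhappy_swap_general G hG σ F hF hσ
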